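/- Let ℓ, n be positive integers and let A_1,…,A_n, B_1,…,B_n, C_1,…,C_n be ℓ×ℓ complex matrices with every B_k invertible. Let 𝒯_n^{tri} be the nℓ×nℓ block tridiagonal matrix with diagonal blocks A_1,…,A_n, superdiagonal blocks B_1,…,B_{n−1} and subdiagonal blocks C_2,…,C_n. Then for every z ∈ ℂ: det(𝒯_n^{tri} − z I_{nℓ}) = (−1)^{nℓ} (∏_{k=1}^n det B_k) · det([I_ℓ, 0] (∏_{k=n}^{1} M_k^{(B)}(z)) [I_ℓ; 0]), where [I_ℓ, 0] ∈ ℂ^{ℓ×2ℓ} and [I_ℓ; 0] ∈ ℂ^{2ℓ×ℓ} are the obvious coordinate projections/inclusions. -/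

import Mathlib

open MeasureTheory ProbabilityTheory Matrix Filter
open scoped ENNReal NNReal BigOperators Classical

noncomputable section

/-- The transfer matrix `M_k^{(B)}(z) = [[−B⁻¹(A − z·I), −B⁻¹C], [I, 0]]`. -/
def transferM {ℓ : ℕ} (A B C : Matrix (Fin ℓ) (Fin ℓ) ℂ) (z : ℂ) :
    Matrix (Fin ℓ ⊕ Fin ℓ) (Fin ℓ ⊕ Fin ℓ) ℂ :=
  Matrix.fromBlocks (-(B⁻¹ * (A - z • (1 : Matrix (Fin ℓ) (Fin ℓ) ℂ)))) (-(B⁻¹ * C)) 1 0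

/-- The ordered transfer-matrix product `M_n^{(B)}(z) ⋯ M_1^{(B)}(z)`. -/
def transferProd (ℓ n : ℕ) (A B C : ℕ → Matrix (Fin ℓ) (Fin ℓ) ℂ) (z : ℂ) :
    Matrix (Fin ℓ ⊕ Fin ℓ) (Fin ℓ ⊕ Fin ℓ) ℂ :=
  ((List.range n).map (fun k => transferM (A (n - k)) (B (n - k)) (C (n - k)) z)).prod

/-- The `nℓ × nℓ` block tridiagonal matrix with diagonal blocks `A_1,…,A_n`,
superdiagonal blocks `B_1,…,B_{n−1}` and subdiagonal blocks `C_2,…,C_n`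
(block rows/columns written 1-based). -/
def blockTri (ℓ n : ℕ) (A B C : ℕ → Matrix (Fin ℓ) (Fin ℓ) ℂ) :
    Matrix (Fin n × Fin ℓ) (Fin n × Fin ℓ) ℂ :=
  Matrix.of fun p q =>
    if (q.1 : ℕ) = (p.1 : ℕ) then A ((p.1 : ℕ) + 1) p.2 q.2
    else if (q.1 : ℕ) = (p.1 : ℕ) + 1 then B ((p.1 : ℕ) + 1) p.2 q.2
    else if (p.1 : ℕ) = (q.1 : ℕ) + 1 then C ((p.1 : ℕ) + 1) p.2 q.2
    else 0

namespace DetBlockTriAux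

variable {ℓ : ℕ}

lemma sum_fin_ite {M : Type*} [AddCommMonoid M] {N : ℕ} (c : ℕ) (hc : c < N) (f : ℕ → M) :
    (∑ j : Fin N, if (j : ℕ) = c then f (j : ℕ) else 0) = f c := by
  rw [Finset.sum_eq_single (⟨c, hc⟩ : Fin N)]
  · simp
  · intro j _ hj
    have hne : (j : ℕ) ≠ c := fun e => hj (Fin.val_injective e)
    simp [hne]
  · simp

lemma sum_fin_ite_zero {M : Type*} [AddCommMonoid M] {N : ℕ} (c : ℕ) (hc : ¬ c < N) (f : ℕ → M) :
    (∑ j : Fin N, if (j : ℕ) = c then f (j : ℕ) else 0) = 0 := by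
  apply Finset.sum_eq_zero
  intro j _
  have hne : (j : ℕ) ≠ c := fun e => hc (e ▸ j.isLt)
  simp [hne]

lemma prod_range_add_one (f : ℕ → ℂ) (N : ℕ) :
    (∏ i ∈ Finset.range N, f (i + 1)) = ∏ k ∈ Finset.Icc 1 N, f k := by
  induction N with
  | zero => simp
  | succ N ih =>
    rw [Finset.prod_range_succ, ih, Finset.prod_Icc_succ_top (by omega : 1 ≤ N + 1)]

/-- The (reversed) pair of fundamental solutions: `W k = (U_k, U_{k-1})`. -/
def W (A B C : ℕ → Matrix (Fin ℓ) (Fin ℓ) ℂ) (z : ℂ) :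
    ℕ → Matrix (Fin ℓ) (Fin ℓ) ℂ × Matrix (Fin ℓ) (Fin ℓ) ℂ
  | 0 => (1, 0)
  | k + 1 =>
    (-((B (k + 1))⁻¹ *
        ((A (k + 1) - z • 1) * (W A B C z k).1 + C (k + 1) * (W A B C z k).2)),
      (W A B C z k).1)

variable (A B C : ℕ → Matrix (Fin ℓ) (Fin ℓ) ℂ) (z : ℂ)

lemma W_snd_succ (k : ℕ) : (W A B C z (k + 1)).2 = (W A B C z k).1 := rfl

lemma W_fst_succ (k : ℕ) :
    (W A B C z (k + 1)).1 =
      -((B (k + 1))⁻¹ *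
        ((A (k + 1) - z • 1) * (W A B C z k).1 + C (k + 1) * (W A B C z k).2)) := rfl

lemma B_mul_W (k : ℕ) (hk : IsUnit (B (k + 1))) :
    B (k + 1) * (W A B C z (k + 1)).1 =
      -((A (k + 1) - z • 1) * (W A B C z k).1 + C (k + 1) * (W A B C z k).2) := by
  have hd : IsUnit (B (k + 1)).det := (Matrix.isUnit_iff_isUnit_det _).mp hk
  rw [W_fst_succ, Matrix.mul_neg, ← Matrix.mul_assoc,
    Matrix.mul_nonsing_inv _ hd, Matrix.one_mul]

lemma transferProd_succ (n : ℕ) :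
    transferProd ℓ (n + 1) A B C z =
      transferM (A (n + 1)) (B (n + 1)) (C (n + 1)) z * transferProd ℓ n A B C z := by
  simp [transferProd, List.range_succ_eq_map, List.map_map, Function.comp_def,
    Nat.succ_sub_succ_eq_sub]

lemma transferProd_mul_fromRows (n : ℕ) :
    transferProd ℓ n A B C z * Matrix.fromRows (1 : Matrix (Fin ℓ) (Fin ℓ) ℂ) (0 : Matrix (Fin ℓ) (Fin ℓ) ℂ) =
      Matrix.fromRows (W A B C z n).1 (W A B C z n).2 := by
  induction n with
  | zero =>
    rw [show transferProd ℓ 0 A B C z = 1 from rfl, Matrix.one_mul]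
    rfl
  | succ n ih =>
    rw [transferProd_succ, Matrix.mul_assoc, ih, transferM, Matrix.fromBlocks_mul_fromRows]
    have h1 : -((B (n + 1))⁻¹ * (A (n + 1) - z • 1)) * (W A B C z n).1 +
        -((B (n + 1))⁻¹ * C (n + 1)) * (W A B C z n).2 = (W A B C z (n + 1)).1 := by
      rw [W_fst_succ]
      noncomm_ring
    have h2 : (1 : Matrix (Fin ℓ) (Fin ℓ) ℂ) * (W A B C z n).1 +
        (0 : Matrix (Fin ℓ) (Fin ℓ) ℂ) * (W A B C z n).2 = (W A B C z (n + 1)).2 := by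
      rw [W_snd_succ, Matrix.one_mul, Matrix.zero_mul, add_zero]
    rw [h1, h2]

/-- The unitriangular-after-rotation right factor. -/
def Qmat (m : ℕ) : Matrix (Fin (m + 1) × Fin ℓ) (Fin (m + 1) × Fin ℓ) ℂ :=
  Matrix.of fun p q =>
    if (q.1 : ℕ) = m then (W A B C z (p.1 : ℕ)).1 p.2 q.2
    else if (p.1 : ℕ) = (q.1 : ℕ) + 1 then (1 : Matrix (Fin ℓ) (Fin ℓ) ℂ) p.2 q.2
    else 0

/-- The lower block triangular product `(T - z) * Q`. -/
def Lmat (m : ℕ) : Matrix (Fin (m + 1) × Fin ℓ) (Fin (m + 1) × Fin ℓ) ℂ :=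
  Matrix.of fun p q =>
    if (q.1 : ℕ) = m then
      (if (p.1 : ℕ) = m then (-(B (m + 1) * (W A B C z (m + 1)).1)) p.2 q.2 else 0)
    else if (p.1 : ℕ) = (q.1 : ℕ) then B ((q.1 : ℕ) + 1) p.2 q.2
    else if (p.1 : ℕ) = (q.1 : ℕ) + 1 then (A ((q.1 : ℕ) + 2) - z • 1) p.2 q.2
    else if (p.1 : ℕ) = (q.1 : ℕ) + 2 then C ((q.1 : ℕ) + 3) p.2 q.2
    else 0

lemma blockTri_sub_apply (m : ℕ) (p q : Fin (m + 1) × Fin ℓ) :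
    (blockTri ℓ (m + 1) A B C - z • 1) p q =
      (if (q.1 : ℕ) = (p.1 : ℕ) then A ((p.1 : ℕ) + 1) - z • 1
        else if (q.1 : ℕ) = (p.1 : ℕ) + 1 then B ((p.1 : ℕ) + 1)
        else if (p.1 : ℕ) = (q.1 : ℕ) + 1 then C ((p.1 : ℕ) + 1)
        else 0) p.2 q.2 := by
  obtain ⟨i, x⟩ := p
  obtain ⟨j, y⟩ := q
  by_cases h1 : (j : ℕ) = (i : ℕ)
  · have hij : i = j := Fin.val_injective h1.symm
    subst hij
    simp [blockTri, Matrix.sub_apply, Matrix.smul_apply, Matrix.one_apply, Prod.ext_iff,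
      smul_eq_mul]
  · have hne : ((i, x) : Fin (m + 1) × Fin ℓ) ≠ (j, y) := by
      intro h
      rw [Prod.ext_iff] at h
      exact h1 ((congrArg Fin.val h.1).symm)
    rw [Matrix.sub_apply, Matrix.smul_apply, Matrix.one_apply_ne hne, smul_zero, sub_zero]
    show (blockTri ℓ (m + 1) A B C) (i, x) (j, y) = _
    simp only [blockTri, Matrix.of_apply]
    rw [if_neg h1, if_neg h1]
    by_cases h2 : (j : ℕ) = (i : ℕ) + 1
    · rw [if_pos h2, if_pos h2]
    · rw [if_neg h2, if_neg h2]
      by_cases h3 : (i : ℕ) = (j : ℕ) + 1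
      · rw [if_pos h3, if_pos h3]
      · rw [if_neg h3, if_neg h3]
        simp

lemma sum_Tblk_W (m : ℕ) (hB : ∀ k ∈ Finset.Icc 1 (m + 1), IsUnit (B k)) (i : Fin (m + 1)) :
    (∑ r : Fin (m + 1),
      (if (r : ℕ) = (i : ℕ) then A ((i : ℕ) + 1) - z • 1
        else if (r : ℕ) = (i : ℕ) + 1 then B ((i : ℕ) + 1)
        else if (i : ℕ) = (r : ℕ) + 1 then C ((i : ℕ) + 1)
        else 0) * (W A B C z (r : ℕ)).1) =
      (if (i : ℕ) = m then -(B (m + 1) * (W A B C z (m + 1)).1) else 0) := by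
  have hsplit : ∀ r : Fin (m + 1),
      (if (r : ℕ) = (i : ℕ) then A ((i : ℕ) + 1) - z • 1
        else if (r : ℕ) = (i : ℕ) + 1 then B ((i : ℕ) + 1)
        else if (i : ℕ) = (r : ℕ) + 1 then C ((i : ℕ) + 1)
        else 0) * (W A B C z (r : ℕ)).1 =
      (if (r : ℕ) = (i : ℕ) then (A ((i : ℕ) + 1) - z • 1) * (W A B C z (r : ℕ)).1 else 0) +
      ((if (r : ℕ) = (i : ℕ) + 1 then B ((i : ℕ) + 1) * (W A B C z (r : ℕ)).1 else 0) +
       (if (i : ℕ) = (r : ℕ) + 1 then C ((i : ℕ) + 1) * (W A B C z (r : ℕ)).1 else 0)) := by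
    intro r
    by_cases h1 : (r : ℕ) = (i : ℕ)
    · rw [if_pos h1, if_pos h1, if_neg (by omega), if_neg (by omega)]
      simp
    · rw [if_neg h1, if_neg h1]
      by_cases h2 : (r : ℕ) = (i : ℕ) + 1
      · rw [if_pos h2, if_pos h2, if_neg (by omega)]
        simp
      · rw [if_neg h2, if_neg h2]
        by_cases h3 : (i : ℕ) = (r : ℕ) + 1
        · rw [if_pos h3, if_pos h3]
          simp
        · rw [if_neg h3, if_neg h3]
          simp
  rw [Finset.sum_congr rfl fun r _ => hsplit r, Finset.sum_add_distrib, Finset.sum_add_distrib]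
  have hS1 : (∑ r : Fin (m + 1),
      if (r : ℕ) = (i : ℕ) then (A ((i : ℕ) + 1) - z • 1) * (W A B C z (r : ℕ)).1 else 0) =
      (A ((i : ℕ) + 1) - z • 1) * (W A B C z (i : ℕ)).1 :=
    sum_fin_ite (i : ℕ) i.isLt (fun t => (A ((i : ℕ) + 1) - z • 1) * (W A B C z t).1)
  have hS3 : (∑ r : Fin (m + 1),
      if (i : ℕ) = (r : ℕ) + 1 then C ((i : ℕ) + 1) * (W A B C z (r : ℕ)).1 else 0) =
      C ((i : ℕ) + 1) * (W A B C z (i : ℕ)).2 := by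
    rcases Nat.eq_zero_or_pos (i : ℕ) with h0 | hpos
    · rw [Finset.sum_eq_zero (fun r _ => by rw [if_neg (by omega)])]
      rw [h0]
      show (0 : Matrix (Fin ℓ) (Fin ℓ) ℂ) = C 1 * (0 : Matrix (Fin ℓ) (Fin ℓ) ℂ)
      rw [Matrix.mul_zero]
    · have hilt := i.isLt
      obtain ⟨t, ht⟩ : ∃ t, (i : ℕ) = t + 1 := ⟨(i : ℕ) - 1, by omega⟩
      have hcongr : ∀ r : Fin (m + 1),
          (if (i : ℕ) = (r : ℕ) + 1 then C ((i : ℕ) + 1) * (W A B C z (r : ℕ)).1 else 0) =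
          (if (r : ℕ) = t then C ((i : ℕ) + 1) * (W A B C z (r : ℕ)).1 else 0) := by
        intro r
        exact if_congr (by omega) rfl rfl
      rw [Finset.sum_congr rfl fun r _ => hcongr r,
        sum_fin_ite t (by omega) (fun s => C ((i : ℕ) + 1) * (W A B C z s).1), ht]
      rw [W_snd_succ]
  rw [hS1, hS3]
  by_cases him : (i : ℕ) = m
  · have hS2 : (∑ r : Fin (m + 1),
        if (r : ℕ) = (i : ℕ) + 1 then B ((i : ℕ) + 1) * (W A B C z (r : ℕ)).1 else 0) = 0 :=
      sum_fin_ite_zero ((i : ℕ) + 1) (by omega) (fun t => B ((i : ℕ) + 1) * (W A B C z t).1)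
    rw [hS2, if_pos him, him]
    rw [B_mul_W A B C z m (hB (m + 1) (Finset.mem_Icc.mpr ⟨by omega, le_rfl⟩))]
    abel
  · have hilt : (i : ℕ) + 1 < m + 1 := by
      have := i.isLt
      omega
    have hS2 : (∑ r : Fin (m + 1),
        if (r : ℕ) = (i : ℕ) + 1 then B ((i : ℕ) + 1) * (W A B C z (r : ℕ)).1 else 0) =
        B ((i : ℕ) + 1) * (W A B C z ((i : ℕ) + 1)).1 :=
      sum_fin_ite ((i : ℕ) + 1) hilt (fun t => B ((i : ℕ) + 1) * (W A B C z t).1)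
    rw [hS2, if_neg him]
    rw [B_mul_W A B C z (i : ℕ) (hB ((i : ℕ) + 1) (Finset.mem_Icc.mpr ⟨by omega, by omega⟩))]
    abel

lemma TQ_eq (m : ℕ) (hB : ∀ k ∈ Finset.Icc 1 (m + 1), IsUnit (B k)) :
    (blockTri ℓ (m + 1) A B C - z • 1) * Qmat A B C z m = Lmat A B C z m := by
  ext ⟨i, x⟩ ⟨j, y⟩
  rw [Matrix.mul_apply, Fintype.sum_prod_type]
  by_cases hj : (j : ℕ) = m
  · have step1 : ∀ (r : Fin (m + 1)) (s : Fin ℓ),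
        (blockTri ℓ (m + 1) A B C - z • 1) (i, x) (r, s) * Qmat A B C z m (r, s) (j, y) =
        (if (r : ℕ) = (i : ℕ) then A ((i : ℕ) + 1) - z • 1
          else if (r : ℕ) = (i : ℕ) + 1 then B ((i : ℕ) + 1)
          else if (i : ℕ) = (r : ℕ) + 1 then C ((i : ℕ) + 1)
          else 0) x s * (W A B C z (r : ℕ)).1 s y := by
      intro r s
      rw [blockTri_sub_apply]
      congr 1
      simp [Qmat, hj]
    calc (∑ r : Fin (m + 1), ∑ s : Fin ℓ,
          (blockTri ℓ (m + 1) A B C - z • 1) (i, x) (r, s) * Qmat A B C z m (r, s) (j, y))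
        = ∑ r : Fin (m + 1),
            ((if (r : ℕ) = (i : ℕ) then A ((i : ℕ) + 1) - z • 1
              else if (r : ℕ) = (i : ℕ) + 1 then B ((i : ℕ) + 1)
              else if (i : ℕ) = (r : ℕ) + 1 then C ((i : ℕ) + 1)
              else 0) * (W A B C z (r : ℕ)).1) x y := by
          refine Finset.sum_congr rfl fun r _ => ?_
          rw [Matrix.mul_apply]
          exact Finset.sum_congr rfl fun s _ => step1 r s
      _ = (∑ r : Fin (m + 1),
            (if (r : ℕ) = (i : ℕ) then A ((i : ℕ) + 1) - z • 1
              else if (r : ℕ) = (i : ℕ) + 1 then B ((i : ℕ) + 1)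
              else if (i : ℕ) = (r : ℕ) + 1 then C ((i : ℕ) + 1)
              else 0) * (W A B C z (r : ℕ)).1) x y := by
          rw [Matrix.sum_apply]
      _ = (if (i : ℕ) = m then -(B (m + 1) * (W A B C z (m + 1)).1) else 0) x y := by
          rw [sum_Tblk_W A B C z m hB i]
      _ = Lmat A B C z m (i, x) (j, y) := by
          simp only [Lmat, Matrix.of_apply, if_pos hj]
          split_ifs with h
          · rfl
          · simp
  · have hjlt : (j : ℕ) + 1 < m + 1 := by
      have := j.isLt
      omega
    have hq : ∀ (r : Fin (m + 1)) (s : Fin ℓ), Qmat A B C z m (r, s) (j, y) =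
        if (r : ℕ) = (j : ℕ) + 1 then (1 : Matrix (Fin ℓ) (Fin ℓ) ℂ) s y else 0 := by
      intro r s
      simp [Qmat, hj]
    have hinner : ∀ r : Fin (m + 1),
        (∑ s : Fin ℓ,
          (blockTri ℓ (m + 1) A B C - z • 1) (i, x) (r, s) * Qmat A B C z m (r, s) (j, y)) =
        (if (r : ℕ) = (j : ℕ) + 1 then
          (if (r : ℕ) = (i : ℕ) then A ((i : ℕ) + 1) - z • 1
            else if (r : ℕ) = (i : ℕ) + 1 then B ((i : ℕ) + 1)
            else if (i : ℕ) = (r : ℕ) + 1 then C ((i : ℕ) + 1)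
            else 0) x y else 0) := by
      intro r
      by_cases hr : (r : ℕ) = (j : ℕ) + 1
      · rw [if_pos hr]
        rw [Finset.sum_congr rfl fun s _ => by rw [hq r s, if_pos hr]]
        have : (∑ s : Fin ℓ,
            (blockTri ℓ (m + 1) A B C - z • 1) (i, x) (r, s) *
              (1 : Matrix (Fin ℓ) (Fin ℓ) ℂ) s y) =
            (blockTri ℓ (m + 1) A B C - z • 1) (i, x) (r, y) := by
          simp [Matrix.one_apply, mul_ite, mul_one, mul_zero]
        rw [this, blockTri_sub_apply]
      · rw [if_neg hr]
        apply Finset.sum_eq_zero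
        intro s _
        rw [hq r s, if_neg hr, mul_zero]
    rw [Finset.sum_congr rfl fun r _ => hinner r,
      sum_fin_ite ((j : ℕ) + 1) hjlt
        (fun t => (if t = (i : ℕ) then A ((i : ℕ) + 1) - z • 1
          else if t = (i : ℕ) + 1 then B ((i : ℕ) + 1)
          else if (i : ℕ) = t + 1 then C ((i : ℕ) + 1)
          else 0) x y)]
    simp only [Lmat, Matrix.of_apply, if_neg hj]
    by_cases h1 : (i : ℕ) = (j : ℕ)
    · rw [if_neg (by omega), if_pos (by omega), if_pos h1, h1]
    · by_cases h2 : (i : ℕ) = (j : ℕ) + 1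
      · rw [if_pos (by omega), if_neg h1, if_pos h2]
        have hx : (i : ℕ) + 1 = (j : ℕ) + 2 := by omega
        rw [hx]
      · by_cases h3 : (i : ℕ) = (j : ℕ) + 2
        · rw [if_neg (by omega), if_neg (by omega), if_pos (by omega),
            if_neg h1, if_neg h2, if_pos h3]
          have hx : (i : ℕ) + 1 = (j : ℕ) + 3 := by omega
          rw [hx]
        · rw [if_neg (by omega), if_neg (by omega), if_neg (by omega),
            if_neg h1, if_neg h2, if_neg h3]
          simp

/-- The canonical equivalence between a fibre of `Prod.fst` and `Fin ℓ`. -/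
def blockEquiv {N : ℕ} (k : Fin N) : {p : Fin N × Fin ℓ // p.1 = k} ≃ Fin ℓ where
  toFun p := p.val.2
  invFun x := ⟨(k, x), rfl⟩
  left_inv p := by
    obtain ⟨⟨p1, p2⟩, hp⟩ := p
    simp only at hp
    subst hp
    rfl
  right_inv x := rfl

lemma det_L (m : ℕ) :
    (Lmat A B C z m).det =
      (∏ k ∈ Finset.Icc 1 (m + 1), (B k).det) *
        ((-1 : ℂ) ^ ℓ * ((W A B C z (m + 1)).1).det) := by
  have hbt : BlockTriangular (Lmat A B C z m)ᵀ Prod.fst := by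
    intro p q hlt
    show Lmat A B C z m q p = 0
    have hv : (q.1 : ℕ) < (p.1 : ℕ) := hlt
    have hp := p.1.isLt
    simp only [Lmat, Matrix.of_apply]
    split_ifs <;> first | rfl | (exfalso; omega)
  rw [← Matrix.det_transpose (Lmat A B C z m), hbt.det_fintype]
  have hblock : ∀ k : Fin (m + 1),
      ((Lmat A B C z m)ᵀ.toSquareBlock Prod.fst k).det =
      (B ((k : ℕ) + 1)).det *
        (if (k : ℕ) = m then (-1 : ℂ) ^ ℓ * ((W A B C z (m + 1)).1).det else 1) := by
    intro k
    by_cases hk : (k : ℕ) = m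
    · have hD : (Lmat A B C z m)ᵀ.toSquareBlock Prod.fst k =
          ((-(B (m + 1) * (W A B C z (m + 1)).1))ᵀ).submatrix (blockEquiv k) (blockEquiv k) := by
        ext p q
        have hp : p.val.1 = k := p.2
        have hq : q.val.1 = k := q.2
        show Lmat A B C z m q.val p.val = _
        simp only [Lmat, Matrix.of_apply, hp, hq]
        rw [if_pos hk, if_pos hk]
        rfl
      rw [hD, Matrix.det_submatrix_equiv_self, Matrix.det_transpose, if_pos hk,
        Matrix.det_neg, Matrix.det_mul, Fintype.card_fin]
      have : (k : ℕ) + 1 = m + 1 := by omega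
      rw [this]
      ring
    · have hD : (Lmat A B C z m)ᵀ.toSquareBlock Prod.fst k =
          ((B ((k : ℕ) + 1))ᵀ).submatrix (blockEquiv k) (blockEquiv k) := by
        ext p q
        have hp : p.val.1 = k := p.2
        have hq : q.val.1 = k := q.2
        show Lmat A B C z m q.val p.val = _
        simp only [Lmat, Matrix.of_apply, hp, hq]
        rw [if_neg hk]
        simp only [if_true]
        rfl
      rw [hD, Matrix.det_submatrix_equiv_self, Matrix.det_transpose, if_neg hk, mul_one]
  rw [Finset.prod_congr rfl fun k _ => hblock k, Finset.prod_mul_distrib]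
  congr 1
  · rw [Fin.prod_univ_eq_prod_range (fun t => (B (t + 1)).det) (m + 1)]
    exact prod_range_add_one (fun t => (B t).det) (m + 1)
  · have hcond : ∀ k : Fin (m + 1), ((k : ℕ) = m) = (k = Fin.last m) := by
      intro k
      simp [Fin.ext_iff]
    have hstep : ∀ k : Fin (m + 1),
        (if (k : ℕ) = m then (-1 : ℂ) ^ ℓ * ((W A B C z (m + 1)).1).det else 1) =
        (if k = Fin.last m then (-1 : ℂ) ^ ℓ * ((W A B C z (m + 1)).1).det else 1) := by
      intro k
      exact if_congr (by simp [Fin.ext_iff]) rfl rfl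
    rw [Finset.prod_congr rfl fun k _ => hstep k,
      Finset.prod_ite_eq' Finset.univ (Fin.last m)
        (fun _ => (-1 : ℂ) ^ ℓ * ((W A B C z (m + 1)).1).det)]
    simp

lemma finRotate_val (m : ℕ) (r : Fin (m + 1)) :
    ((finRotate (m + 1) r : Fin (m + 1)) : ℕ) =
      if (r : ℕ) = m then 0 else (r : ℕ) + 1 := by
  rw [coe_finRotate]
  exact if_congr (by simp [Fin.ext_iff]) rfl rfl

lemma det_Q (m : ℕ) : (Qmat A B C z m).det = (-1 : ℂ) ^ (m * ℓ) := by
  set σ : Equiv.Perm (Fin (m + 1) × Fin ℓ) :=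
    Equiv.prodCongrLeft (fun _ : Fin ℓ => finRotate (m + 1)) with hσ
  have happ : ∀ p : Fin (m + 1) × Fin ℓ, σ p = (finRotate (m + 1) p.1, p.2) := by
    intro p
    rfl
  have hQ' : BlockTriangular ((Qmat A B C z m).submatrix σ id) Prod.fst := by
    intro p q hlt
    have hv : (q.1 : ℕ) < (p.1 : ℕ) := hlt
    have hq1 := q.1.isLt
    have hp1 := p.1.isLt
    show Qmat A B C z m (finRotate (m + 1) p.1, p.2) q = 0
    simp only [Qmat, Matrix.of_apply]
    have h2 : ¬ (((finRotate (m + 1) p.1 : Fin (m + 1)) : ℕ) = (q.1 : ℕ) + 1) := by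
      rw [finRotate_val]
      split_ifs
      · exact not_false
      · omega
    rw [if_neg (by omega : ¬ (q.1 : ℕ) = m), if_neg h2]
  have hdetQ' : ((Qmat A B C z m).submatrix σ id).det = 1 := by
    rw [hQ'.det_fintype]
    apply Finset.prod_eq_one
    intro k _
    have hblk : ((Qmat A B C z m).submatrix σ id).toSquareBlock Prod.fst k =
        ((1 : Matrix (Fin ℓ) (Fin ℓ) ℂ)).submatrix (blockEquiv k) (blockEquiv k) := by
      ext p q
      have hp : p.val.1 = k := p.2
      have hq : q.val.1 = k := q.2
      show Qmat A B C z m (finRotate (m + 1) p.val.1, p.val.2) q.val = _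
      simp only [Qmat, Matrix.of_apply, hp, hq]
      by_cases hk : (k : ℕ) = m
      · rw [if_pos hk]
        have h0 : ((finRotate (m + 1) k : Fin (m + 1)) : ℕ) = 0 := by
          rw [finRotate_val, if_pos hk]
        rw [h0]
        rfl
      · rw [if_neg hk, if_pos (by rw [finRotate_val, if_neg hk])]
        rfl
    rw [hblk, Matrix.det_submatrix_equiv_self, Matrix.det_one]
  have hsign : ((Equiv.Perm.sign σ : ℤ) : ℂ) = (-1 : ℂ) ^ (m * ℓ) := by
    rw [hσ, Equiv.Perm.sign_prodCongrLeft]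
    simp [sign_finRotate, Finset.prod_const, ← pow_mul]
  have hperm := Matrix.det_permute σ (Qmat A B C z m)
  rw [hdetQ'] at hperm
  have hsq : (-1 : ℂ) ^ (m * ℓ) * (-1 : ℂ) ^ (m * ℓ) = 1 := by
    rw [← pow_add]
    exact Even.neg_one_pow ⟨m * ℓ, rfl⟩
  calc (Qmat A B C z m).det
      = ((-1 : ℂ) ^ (m * ℓ) * (-1 : ℂ) ^ (m * ℓ)) * (Qmat A B C z m).det := by
        rw [hsq, one_mul]
    _ = (-1 : ℂ) ^ (m * ℓ) * (((Equiv.Perm.sign σ : ℤ) : ℂ) * (Qmat A B C z m).det) := by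
        rw [hsign]
        ring
    _ = (-1 : ℂ) ^ (m * ℓ) := by
        rw [← hperm, mul_one]

end DetBlockTriAux

/-- **Corollary (transfer-matrix formula for the block tridiagonal determinant).**
`det(𝒯_n^{tri} − z I) = (−1)^{nℓ} (∏_{k=1}^n det B_k) ·
  det([I_ℓ, 0] (M_n ⋯ M_1) [I_ℓ; 0])`. -/
theorem det_blockTri_transfer
    (ℓ n : ℕ) (hℓ : 0 < ℓ) (hn : 0 < n)
    (A B C : ℕ → Matrix (Fin ℓ) (Fin ℓ) ℂ)
    (hB : ∀ k ∈ Finset.Icc 1 n, IsUnit (B k)) (z : ℂ) :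
    (blockTri ℓ n A B C - z • 1).det =
      (-1 : ℂ) ^ (n * ℓ) * (∏ k ∈ Finset.Icc 1 n, (B k).det) *
        (Matrix.fromCols (1 : Matrix (Fin ℓ) (Fin ℓ) ℂ) (0 : Matrix (Fin ℓ) (Fin ℓ) ℂ) *
          transferProd ℓ n A B C z *
          Matrix.fromRows (1 : Matrix (Fin ℓ) (Fin ℓ) ℂ) (0 : Matrix (Fin ℓ) (Fin ℓ) ℂ)).det := by
  obtain ⟨m, rfl⟩ : ∃ m, n = m + 1 := ⟨n - 1, by omega⟩
  have hR : Matrix.fromCols (1 : Matrix (Fin ℓ) (Fin ℓ) ℂ) (0 : Matrix (Fin ℓ) (Fin ℓ) ℂ) *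
      transferProd ℓ (m + 1) A B C z *
      Matrix.fromRows (1 : Matrix (Fin ℓ) (Fin ℓ) ℂ) (0 : Matrix (Fin ℓ) (Fin ℓ) ℂ) =
      (DetBlockTriAux.W A B C z (m + 1)).1 := by
    rw [Matrix.mul_assoc, DetBlockTriAux.transferProd_mul_fromRows,
      Matrix.fromCols_mul_fromRows, Matrix.one_mul, Matrix.zero_mul, add_zero]
  rw [hR]
  have hTQ := DetBlockTriAux.TQ_eq A B C z m hB
  have hdet := congrArg Matrix.det hTQ
  rw [Matrix.det_mul, DetBlockTriAux.det_Q, DetBlockTriAux.det_L] at hdet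
  have hsq : (-1 : ℂ) ^ (m * ℓ) * (-1 : ℂ) ^ (m * ℓ) = 1 := by
    rw [← pow_add]
    exact Even.neg_one_pow ⟨m * ℓ, rfl⟩
  have hmain : (blockTri ℓ (m + 1) A B C - z • 1).det =
      (-1 : ℂ) ^ (m * ℓ) * ((∏ k ∈ Finset.Icc 1 (m + 1), (B k).det) *
        ((-1 : ℂ) ^ ℓ * ((DetBlockTriAux.W A B C z (m + 1)).1).det)) := by
    calc (blockTri ℓ (m + 1) A B C - z • 1).det
        = ((blockTri ℓ (m + 1) A B C - z • 1).det * (-1 : ℂ) ^ (m * ℓ)) * (-1 : ℂ) ^ (m * ℓ) := by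
          rw [mul_assoc, hsq, mul_one]
      _ = (-1 : ℂ) ^ (m * ℓ) * ((∏ k ∈ Finset.Icc 1 (m + 1), (B k).det) *
          ((-1 : ℂ) ^ ℓ * ((DetBlockTriAux.W A B C z (m + 1)).1).det)) := by
          rw [hdet]
          ring
  rw [hmain, show (m + 1) * ℓ = m * ℓ + ℓ by ring, pow_add]
  ring
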